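/- arXiv:1605.05063 — 2 statements merged into one kernel-verified Lean document; each statement's English description precedes it below -/
import Mathlib

section
/- Let q ∈ ℝ with 0 < q < 1 and λ ∈ ℂ. There exists a twice continuously differentiable function u : ℝ → ℂ, not identically zero on [0,1], such that u''(x) = λ² u(x) for all x ∈ [0,1], u(0) = 0, and u'(1) = q λ u(1), if and only if there exists n ∈ ℤ with λ = (1/2)·ln((1+q)/(1−q)) + i (2n+1) π / 2. -/
/-! Along a solution of `u'' = λ²u` the quantities `λu cosh λx − u' sinh λx` and
`u' cosh λx − λu sinh λx` have zero derivative, so a solution with `u(0) = 0` satisfies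
`u' = u'(0) cosh λx` and `λu = u'(0) sinh λx` on `[0, 1]`; it is nontrivial exactly when
`u'(0) ≠ 0`. The boundary condition at `1` thus becomes `cosh λ = q sinh λ`, that is
`e^{2λ} = −(1 + q)/(1 − q)`, whose solutions are read off from the periodicity of the complex
exponential. -/

open Complex Set

lemma eq_of_hasDerivAt_zero_on_Icc {E : Type*} [NormedAddCommGroup E] [NormedSpace ℝ E]
    {f : ℝ → E} {a b : ℝ} (hf : ∀ x ∈ Icc a b, HasDerivAt f 0 x) :
    ∀ x ∈ Icc a b, f x = f a :=
  constant_of_has_deriv_right_zero (fun x hx => (hf x hx).continuousAt.continuousWithinAt)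
    fun x hx => (hf x (Ico_subset_Icc_self hx)).hasDerivWithinAt

section HyperbolicOfReal

variable (lam : ℂ) (x : ℝ)

lemma hasDerivAt_sinh_const_mul :
    HasDerivAt (fun y : ℝ => sinh (lam * y)) (lam * cosh (lam * x)) x := by
  simpa [mul_comm] using ((hasDerivAt_id (x : ℂ)).const_mul lam).csinh.comp_ofReal

lemma hasDerivAt_cosh_const_mul :
    HasDerivAt (fun y : ℝ => cosh (lam * y)) (lam * sinh (lam * x)) x := by
  simpa [mul_comm] using ((hasDerivAt_id (x : ℂ)).const_mul lam).ccosh.comp_ofReal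

lemma deriv_sinh_const_mul :
    deriv (fun y : ℝ => sinh (lam * y)) = fun y : ℝ => lam * cosh (lam * y) :=
  funext fun y => (hasDerivAt_sinh_const_mul lam y).deriv

lemma contDiff_sinh_const_mul {n : WithTop ℕ∞} : ContDiff ℝ n fun y : ℝ => sinh (lam * y) :=
  (contDiff_sinh.restrict_scalars ℝ).comp (contDiff_const.mul ofRealCLM.contDiff)

end HyperbolicOfReal

lemma eq_cosh_sinh_of_deriv_deriv_eq {lam : ℂ} {u : ℝ → ℂ} (hu : Differentiable ℝ u)
    (hu' : Differentiable ℝ (deriv u))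
    (hode : ∀ x ∈ Icc (0:ℝ) 1, deriv (deriv u) x = lam ^ 2 * u x) {x : ℝ} (hx : x ∈ Icc 0 1) :
    deriv u x = deriv u 0 * cosh (lam * x) + lam * u 0 * sinh (lam * x) ∧
      lam * u x = lam * u 0 * cosh (lam * x) + deriv u 0 * sinh (lam * x) := by
  have hA : ∀ y ∈ Icc (0:ℝ) 1, HasDerivAt
      (fun y => lam * u y * cosh (lam * y) - deriv u y * sinh (lam * y)) 0 y := by
    intro y hy
    refine ((((hu y).hasDerivAt.const_mul lam).mul (hasDerivAt_cosh_const_mul lam y)).sub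
      ((hu' y).hasDerivAt.mul (hasDerivAt_sinh_const_mul lam y))).congr_deriv ?_
    rw [hode y hy]; ring
  have hB : ∀ y ∈ Icc (0:ℝ) 1, HasDerivAt
      (fun y => deriv u y * cosh (lam * y) - lam * u y * sinh (lam * y)) 0 y := by
    intro y hy
    refine (((hu' y).hasDerivAt.mul (hasDerivAt_cosh_const_mul lam y)).sub
      (((hu y).hasDerivAt.const_mul lam).mul (hasDerivAt_sinh_const_mul lam y))).congr_deriv ?_
    rw [hode y hy]; ring
  have hA0 := eq_of_hasDerivAt_zero_on_Icc hA x hx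
  have hB0 := eq_of_hasDerivAt_zero_on_Icc hB x hx
  simp only [ofReal_zero, mul_zero, cosh_zero, sinh_zero, mul_one, sub_zero] at hA0 hB0
  have hpyth := cosh_sq_sub_sinh_sq (lam * x)
  constructor
  · linear_combination cosh (lam * x) * hB0 + sinh (lam * x) * hA0 - deriv u x * hpyth
  · linear_combination sinh (lam * x) * hB0 + cosh (lam * x) * hA0 - lam * u x * hpyth

lemma cosh_eq_mul_sinh_of_eigenfunction {q lam : ℂ} {u : ℝ → ℂ} (hu : ContDiff ℝ 2 u)
    (hnz : ¬ ∀ x ∈ Icc (0:ℝ) 1, u x = 0)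
    (hode : ∀ x ∈ Icc (0:ℝ) 1, deriv (deriv u) x = lam ^ 2 * u x)
    (h0 : u 0 = 0) (h1 : deriv u 1 = q * lam * u 1) :
    cosh lam = q * sinh lam := by
  have hd : Differentiable ℝ u := hu.differentiable two_ne_zero
  have hsol := fun x (hx : x ∈ Icc (0:ℝ) 1) =>
    eq_cosh_sinh_of_deriv_deriv_eq hd hu.differentiable_deriv_two hode hx
  simp only [h0, mul_zero, zero_mul, add_zero, zero_add] at hsol
  have hv0 : deriv u 0 ≠ 0 := by
    intro hz
    have hconst : ∀ y ∈ Icc (0:ℝ) 1, HasDerivAt u 0 y := fun y hy => by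
      simpa [(hsol y hy).1, hz] using (hd y).hasDerivAt
    exact hnz fun x hx => (eq_of_hasDerivAt_zero_on_Icc hconst x hx).trans h0
  obtain ⟨hv1, hu1⟩ := hsol 1 (right_mem_Icc.mpr zero_le_one)
  simp only [ofReal_one, mul_one] at hv1 hu1
  apply mul_left_cancel₀ hv0
  linear_combination h1 - hv1 + q * hu1

lemma exists_eigenfunction_of_cosh_eq_mul_sinh {q lam : ℂ} (h : cosh lam = q * sinh lam) :
    ∃ u : ℝ → ℂ, ContDiff ℝ 2 u ∧ (¬ ∀ x ∈ Icc (0:ℝ) 1, u x = 0) ∧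
      (∀ x ∈ Icc (0:ℝ) 1, deriv (deriv u) x = lam ^ 2 * u x) ∧
      u 0 = 0 ∧ deriv u 1 = q * lam * u 1 := by
  refine ⟨fun x : ℝ => sinh (lam * x), contDiff_sinh_const_mul lam, fun hall => ?_,
    fun x _ => ?_, by simp, ?_⟩
  · have hs : sinh lam = 0 := by simpa using hall 1 (right_mem_Icc.mpr zero_le_one)
    simpa [hs, h] using cosh_sq_sub_sinh_sq lam
  · rw [deriv_sinh_const_mul, ((hasDerivAt_cosh_const_mul lam x).const_mul lam).deriv]
    ring
  · simp only [deriv_sinh_const_mul, ofReal_one, mul_one, h]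
    ring

lemma cosh_eq_mul_sinh_iff_exp_two_mul {q : ℂ} (hq : q ≠ 1) (z : ℂ) :
    cosh z = q * sinh z ↔ exp (2 * z) = -((1 + q) / (1 - q)) := by
  have hq' : 1 - q ≠ 0 := sub_ne_zero.mpr hq.symm
  rw [cosh, sinh, two_mul, exp_add, exp_neg]
  have hz := exp_ne_zero z
  constructor <;> intro h <;> field_simp at h ⊢ <;> linear_combination h

lemma exp_two_mul_eq_neg_iff {r : ℝ} (hr : 0 < r) (z : ℂ) :
    exp (2 * z) = -r ↔ ∃ n : ℤ, z = (Real.log r : ℂ) / 2 + (2 * n + 1) * Real.pi / 2 * I := by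
  have hlog : exp (Real.log r + Real.pi * I) = -r := by
    rw [exp_add, exp_pi_mul_I, ← ofReal_exp, Real.exp_log hr, mul_neg_one]
  rw [← hlog, exp_eq_exp_iff_exists_int]
  refine exists_congr fun n => ⟨fun h => ?_, fun h => ?_⟩
  · linear_combination h / 2
  · linear_combination 2 * h

/-- Eigenvalue characterization (Lemma 3.1, case `0 < q < 1`) for the anti-stable wave
equation: the boundary value problem `u'' = λ²u`, `u(0) = 0`, `u'(1) = qλu(1)` has a
nontrivial solution iff `λ = (1/2)ln((1+q)/(1−q)) + i(2n+1)π/2` for some integer `n`. -/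
theorem wave_eigenvalues_q_lt_one (q : ℝ) (hq0 : 0 < q) (hq1 : q < 1) (lam : ℂ) :
    (∃ u : ℝ → ℂ, ContDiff ℝ 2 u ∧ (¬ ∀ x ∈ Set.Icc (0:ℝ) 1, u x = 0) ∧
      (∀ x ∈ Set.Icc (0:ℝ) 1, deriv (deriv u) x = lam ^ 2 * u x) ∧
      u 0 = 0 ∧ deriv u 1 = (q : ℂ) * lam * u 1) ↔
    ∃ n : ℤ, lam = ((Real.log ((1 + q) / (1 - q)) : ℂ)) / 2 +
      (2 * (n : ℂ) + 1) * (Real.pi : ℂ) / 2 * Complex.I := by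
  have hq1' : (q : ℂ) ≠ 1 := by exact_mod_cast hq1.ne
  have hr : 0 < (1 + q) / (1 - q) := div_pos (by linarith) (by linarith)
  rw [← exp_two_mul_eq_neg_iff hr, ofReal_div, ofReal_add, ofReal_sub, ofReal_one,
    ← cosh_eq_mul_sinh_iff_exp_two_mul hq1']
  exact ⟨fun ⟨_, hu, hnz, hode, h0, h1⟩ => cosh_eq_mul_sinh_of_eigenfunction hu hnz hode h0 h1,
    exists_eigenfunction_of_cosh_eq_mul_sinh⟩
end

section
/- Let q ∈ ℝ with q > 1, and for n ∈ ℤ set λ_n = (1/2)·ln((q+1)/(q−1)) + i n π. Let a : ℤ → ℂ satisfy Σ_{n∈ℤ} |a_n| < ∞ with a not identically zero, let y_e(t) = Σ_{n∈ℤ} a_n e^{λ_n t}, let d : ℝ → ℂ be measurable with |d(t)| ≤ M for all t and some M ≥ 0, and set y = y_e + d. Fix c > 2 and for T ∈ ℝ define q_T = ( ‖y‖_{L²(T,T+c)} + ‖y‖_{L²(T−2,T+c−2)} ) / ( ‖y‖_{L²(T,T+c)} − ‖y‖_{L²(T−2,T+c−2)} ). Then q_T → q as T → +∞. -/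
/-!
Write `σ = f(q)`. The exact output factors as `y_e(t) = e^{σt} G(t)`, where `G = ∑ aₙ e^{inπt}`
is a continuous 2-periodic function, so `y_e(t - 2) = e^{-2σ} y_e(t)` and the window norms
`R(T) = ‖y_e‖_{L²(T,T+c)}` satisfy `‖y_e‖_{L²(T-2,T+c-2)} = e^{-2σ} R(T)`. By Parseval
`∫_T^{T+2} |G|² = 2 ∑ |aₙ|² > 0`, and since `c ≥ 2` this gives `R(T) ≥ e^{σT} √(2 ∑ |aₙ|²) → ∞`.
By Minkowski the bounded disturbance moves each window norm by at most `M √c`, which is negligible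
against `R(T)`, so `q_T → (1 + e^{-2σ}) / (1 - e^{-2σ}) = q`.
-/

open MeasureTheory Filter Topology Set

section L2

variable {α E : Type*} [MeasurableSpace α] {μ : Measure α} [NormedAddCommGroup E] {f g : α → E}

lemma sqrt_integral_norm_sq_eq_norm_toLp (hf : MemLp f 2 μ) :
    √(∫ x, ‖f x‖ ^ 2 ∂μ) = ‖hf.toLp f‖ := by
  rw [Lp.norm_toLp, hf.eLpNorm_eq_integral_rpow_norm two_ne_zero ENNReal.ofNat_ne_top,
    ENNReal.toReal_ofReal (by positivity), Real.sqrt_eq_rpow]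
  norm_num

lemma abs_sqrt_integral_norm_sq_add_sub_le (hf : MemLp f 2 μ) (hg : MemLp g 2 μ) :
    |√(∫ x, ‖(f + g) x‖ ^ 2 ∂μ) - √(∫ x, ‖f x‖ ^ 2 ∂μ)| ≤ √(∫ x, ‖g x‖ ^ 2 ∂μ) := by
  rw [sqrt_integral_norm_sq_eq_norm_toLp (hf.add hg), sqrt_integral_norm_sq_eq_norm_toLp hf,
    sqrt_integral_norm_sq_eq_norm_toLp hg, MemLp.toLp_add hf hg]
  simpa using abs_norm_sub_norm_le (hf.toLp f + hg.toLp g) (hf.toLp f)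

end L2

noncomputable def l2NormOn {E : Type*} [NormedAddCommGroup E] (y : ℝ → E) (a b : ℝ) : ℝ :=
  √(∫ t in a..b, ‖y t‖ ^ 2)

section l2NormOn

variable {E : Type*} [NormedAddCommGroup E] {f g : ℝ → E} {a b : ℝ}

lemma abs_l2NormOn_add_sub_le (hab : a ≤ b) (hf : MemLp f 2 (volume.restrict (Ioc a b)))
    (hg : MemLp g 2 (volume.restrict (Ioc a b))) :
    |l2NormOn (f + g) a b - l2NormOn f a b| ≤ l2NormOn g a b := by
  simp only [l2NormOn, intervalIntegral.integral_of_le hab]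
  exact abs_sqrt_integral_norm_sq_add_sub_le hf hg

lemma l2NormOn_le_of_norm_le (hab : a ≤ b) {M : ℝ} (hg : ∀ t, ‖g t‖ ≤ M) :
    l2NormOn g a b ≤ √((b - a) * M ^ 2) := by
  refine Real.sqrt_le_sqrt ?_
  calc ∫ t in a..b, ‖g t‖ ^ 2 ≤ ‖∫ t in a..b, ‖g t‖ ^ 2‖ := Real.le_norm_self _
    _ ≤ M ^ 2 * |b - a| := intervalIntegral.norm_integral_le_of_norm_le_const fun t _ => by
        simpa using pow_le_pow_left₀ (norm_nonneg _) (hg t) 2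
    _ = (b - a) * M ^ 2 := by rw [abs_of_nonneg (sub_nonneg.2 hab), mul_comm]

lemma abs_l2NormOn_add_sub_le_of_norm_le (hab : a ≤ b) (hf : Continuous f)
    (hg : AEStronglyMeasurable g) {M : ℝ} (hgM : ∀ t, ‖g t‖ ≤ M) :
    |l2NormOn (f + g) a b - l2NormOn f a b| ≤ √((b - a) * M ^ 2) := by
  have hfL2 : MemLp f 2 (volume.restrict (Ioc a b)) :=
    (memLp_two_iff_integrable_sq_norm hf.aestronglyMeasurable).2
      (hf.norm.pow 2).integrableOn_Ioc
  exact (abs_l2NormOn_add_sub_le hab hfL2 (.of_bound hg.restrict M (ae_of_all _ hgM))).trans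
    (l2NormOn_le_of_norm_le hab hgM)

lemma l2NormOn_sub_of_sub_eq_smul {𝕜 : Type*} [NormedField 𝕜] [NormedSpace 𝕜 E] {p : ℝ} {r : 𝕜}
    (hg : ∀ t, g (t - p) = r • g t) :
    l2NormOn g (a - p) (b - p) = ‖r‖ * l2NormOn g a b := by
  rw [l2NormOn, l2NormOn, ← intervalIntegral.integral_comp_sub_right (fun t => ‖g t‖ ^ 2)]
  simp only [hg, norm_smul, mul_pow, intervalIntegral.integral_const_mul]
  rw [Real.sqrt_mul (by positivity), Real.sqrt_sq (norm_nonneg r)]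

end l2NormOn

section Limits

variable {ι : Type*} {l : Filter ι} {A B R : ι → ℝ} {ρ K : ℝ}

lemma tendsto_div_of_abs_sub_mul_le (hR : Tendsto R l atTop) (hA : ∀ i, |A i - ρ * R i| ≤ K) :
    Tendsto (fun i => A i / R i) l (𝓝 ρ) := by
  have hK : Tendsto (fun i => K / R i) l (𝓝 0) := tendsto_const_nhds.div_atTop hR
  have hErr : Tendsto (fun i => (A i - ρ * R i) / R i) l (𝓝 0) := by
    refine squeeze_zero_norm' ?_ hK
    filter_upwards [hR.eventually_gt_atTop 0] with i hi
    rw [Real.norm_eq_abs, abs_div, abs_of_pos hi]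
    exact div_le_div_of_nonneg_right (hA i) hi.le
  have hρ := hErr.const_add ρ
  rw [add_zero] at hρ
  refine hρ.congr' ?_
  filter_upwards [hR.eventually_gt_atTop 0] with i hi
  field_simp
  ring

lemma tendsto_add_div_sub_of_abs_sub_le (hR : Tendsto R l atTop) (hA : ∀ i, |A i - R i| ≤ K)
    (hB : ∀ i, |B i - ρ * R i| ≤ K) (hρ : ρ ≠ 1) :
    Tendsto (fun i => (A i + B i) / (A i - B i)) l (𝓝 ((1 + ρ) / (1 - ρ))) := by
  have hA' := tendsto_div_of_abs_sub_mul_le (ρ := 1) hR (by simpa using hA)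
  have hB' := tendsto_div_of_abs_sub_mul_le hR hB
  refine ((hA'.add hB').div (hA'.sub hB') (sub_ne_zero.2 hρ.symm)).congr' ?_
  filter_upwards [hR.eventually_gt_atTop 0] with i hi
  rw [Pi.div_apply, ← add_div, ← sub_div, div_div_div_cancel_right₀ hi.ne']

end Limits

section FourierSeries

open AddCircle

variable {p : ℝ} [Fact (0 < p)] {a : ℤ → ℂ}

lemma summable_smul_fourier (ha : Summable (‖a ·‖)) :
    Summable fun n => a n • (fourier n : C(AddCircle p, ℂ)) :=
  .of_norm <| by simpa [norm_smul, fourier_norm] using ha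

lemma fourierCoeff_tsum_smul_fourier (ha : Summable (‖a ·‖)) :
    fourierCoeff ⇑(∑' n, a n • fourier n : C(AddCircle p, ℂ)) = a := by
  ext m
  have hL2 := (ContinuousMap.toLp (E := ℂ) 2 (haarAddCircle (T := p)) ℂ).hasSum
    (summable_smul_fourier ha).hasSum
  have hinner := (innerSL ℂ (fourierBasis (T := p) m)).hasSum hL2
  rw [← fourierCoeff_toLp, ← fourierBasis_repr, fourierBasis.repr_apply_apply]
  refine hinner.unique ?_
  have hcoord : ∀ n, innerSL ℂ (fourierBasis (T := p) m)
      (ContinuousMap.toLp (E := ℂ) 2 haarAddCircle ℂ (a n • fourier n)) =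
        if n = m then a m else 0 := by
    intro n
    rw [map_smul, innerSL_apply_apply, inner_smul_right, ← fourierLp, ← coe_fourierBasis,
      orthonormal_iff_ite.mp fourierBasis.orthonormal]
    by_cases h : n = m
    · subst h; simp
    · simp [h, Ne.symm h]
  simpa only [hcoord] using hasSum_ite_eq m (a m)

lemma hasSum_sq_norm_of_tsum_smul_fourier (ha : Summable (‖a ·‖)) (s : ℝ) :
    HasSum (fun n => ‖a n‖ ^ 2)
      (p⁻¹ * ∫ t in s..s + p, ‖(∑' n, a n • fourier n : C(AddCircle p, ℂ)) t‖ ^ 2) := by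
  set G : C(AddCircle p, ℂ) := ∑' n, a n • fourier n
  have hParseval :=
    hasSum_sq_fourierCoeff (ContinuousMap.toLp (E := ℂ) 2 (haarAddCircle (T := p)) ℂ G)
  simp only [fourierCoeff_toLp, G, fourierCoeff_tsum_smul_fourier ha] at hParseval
  have hL2 : ∫ t, ‖ContinuousMap.toLp (E := ℂ) 2 (haarAddCircle (T := p)) ℂ G t‖ ^ 2 ∂haarAddCircle
      = ∫ t, ‖G t‖ ^ 2 ∂haarAddCircle :=
    integral_congr_ae ((ContinuousMap.coeFn_toLp _ G).fun_comp (‖·‖ ^ 2))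
  rwa [hL2, integral_haarAddCircle, smul_eq_mul,
    ← AddCircle.intervalIntegral_preimage p s (fun x => ‖G x‖ ^ 2)] at hParseval

lemma tsum_mul_exp_eq_exp_mul_tsum_smul_fourier (ha : Summable (‖a ·‖)) {σ : ℝ} {lam : ℤ → ℂ}
    (hlam : ∀ n : ℤ, lam n = σ + 2 * Real.pi * Complex.I * n / p) (t : ℝ) :
    ∑' n, a n * Complex.exp (lam n * t) =
      Real.exp (σ * t) * (∑' n, a n • fourier n : C(AddCircle p, ℂ)) t := by
  rw [← ContinuousMap.tsum_apply (summable_smul_fourier ha), ← tsum_mul_left]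
  refine tsum_congr fun n => ?_
  rw [ContinuousMap.smul_apply, smul_eq_mul, fourier_coe_apply, hlam, Complex.ofReal_exp,
    mul_left_comm, ← Complex.exp_add]
  push_cast
  ring_nf

end FourierSeries

section ExpModulated

open AddCircle

variable {p σ : ℝ}

lemma l2NormOn_exp_mul_sub_period (G : C(AddCircle p, ℂ)) (a b : ℝ) :
    l2NormOn (fun t : ℝ => (Real.exp (σ * t) : ℂ) * G t) (a - p) (b - p) =
      Real.exp (-(σ * p)) * l2NormOn (fun t : ℝ => (Real.exp (σ * t) : ℂ) * G t) a b := by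
  have hshift : ∀ t : ℝ, (Real.exp (σ * (t - p)) : ℂ) * G ↑(t - p) =
      (Real.exp (-(σ * p)) : ℂ) • ((Real.exp (σ * t) : ℂ) * G t) := by
    intro t
    rw [coe_sub, coe_period, sub_zero, smul_eq_mul, ← mul_assoc, ← Complex.ofReal_mul,
      ← Real.exp_add]
    ring_nf
  rw [l2NormOn_sub_of_sub_eq_smul hshift, Complex.norm_real,
    Real.norm_of_nonneg (Real.exp_pos _).le]

lemma exp_mul_sqrt_integral_le_l2NormOn (G : C(AddCircle p, ℂ)) (hσ : 0 ≤ σ) (hp : 0 ≤ p)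
    {c : ℝ} (hpc : p ≤ c) (T : ℝ) :
    Real.exp (σ * T) * √(∫ t in T..T + p, ‖G t‖ ^ 2) ≤
      l2NormOn (fun t : ℝ => (Real.exp (σ * t) : ℂ) * G t) T (T + c) := by
  have hcont : Continuous fun t : ℝ => ‖(Real.exp (σ * t) : ℂ) * G t‖ ^ 2 := by fun_prop
  rw [l2NormOn, ← Real.sqrt_sq (Real.exp_pos _).le, ← Real.sqrt_mul (by positivity),
    ← intervalIntegral.integral_const_mul]
  refine Real.sqrt_le_sqrt ?_
  calc ∫ t in T..T + p, Real.exp (σ * T) ^ 2 * ‖G t‖ ^ 2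
      ≤ ∫ t in T..T + p, ‖(Real.exp (σ * t) : ℂ) * G t‖ ^ 2 := by
        refine intervalIntegral.integral_mono_on (by linarith)
          (Continuous.intervalIntegrable (by fun_prop) _ _)
          (hcont.intervalIntegrable _ _) fun t ht => ?_
        rw [norm_mul, mul_pow, Complex.norm_real, Real.norm_of_nonneg (Real.exp_pos _).le]
        gcongr
        exact ht.1
    _ ≤ ∫ t in T..T + c, ‖(Real.exp (σ * t) : ℂ) * G t‖ ^ 2 :=
        intervalIntegral.integral_mono_interval le_rfl (by linarith) (by linarith)
          (ae_of_all _ fun _ => by positivity) (hcont.intervalIntegrable _ _)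

lemma tendsto_l2NormOn_exp_mul_tsum_smul_fourier_atTop [Fact (0 < p)] {a : ℤ → ℂ}
    (ha : Summable (‖a ·‖)) (ha0 : a ≠ 0) (hσ : 0 < σ) {c : ℝ} (hpc : p ≤ c) :
    Tendsto (fun T => l2NormOn (fun t : ℝ => (Real.exp (σ * t) : ℂ) *
      (∑' n, a n • fourier n : C(AddCircle p, ℂ)) t) T (T + c)) atTop atTop := by
  have hp : 0 < p := Fact.out
  have hG : ∀ T, ∫ t in T..T + p, ‖(∑' n, a n • fourier n : C(AddCircle p, ℂ)) t‖ ^ 2 =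
      p * ∑' n, ‖a n‖ ^ 2 := fun T => by
    rw [(hasSum_sq_norm_of_tsum_smul_fourier (p := p) ha T).tsum_eq, mul_inv_cancel_left₀ hp.ne']
  have hS : 0 < ∑' n, ‖a n‖ ^ 2 := by
    obtain ⟨m, hm⟩ := Function.ne_iff.mp ha0
    exact (by positivity : 0 < ‖a m‖ ^ 2).trans_le
      ((hasSum_sq_norm_of_tsum_smul_fourier (p := p) ha 0).summable.le_tsum m
        fun _ _ => by positivity)
  refine tendsto_atTop_mono (exp_mul_sqrt_integral_le_l2NormOn _ hσ.le hp.le hpc) ?_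
  simp only [hG]
  exact (Real.tendsto_exp_atTop.comp (tendsto_id.const_mul_atTop hσ)).atTop_mul_const
    (by positivity)

end ExpModulated

theorem wave_disturbed_identification_general (q : ℝ) (hq : 1 < q)
    (lam : ℤ → ℂ)
    (hlam : ∀ n : ℤ,
      lam n = ((Real.log ((q + 1) / (q - 1)) : ℂ)) / 2 + (n : ℂ) * (Real.pi : ℂ) * Complex.I)
    (a : ℤ → ℂ) (ha : Summable fun n => ‖a n‖) (ha0 : a ≠ 0)
    (M : ℝ)
    (d : ℝ → ℂ) (hdmeas : Measurable d) (hdM : ∀ t : ℝ, ‖d t‖ ≤ M)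
    (y : ℝ → ℂ)
    (hy : ∀ t : ℝ, y t = (∑' n : ℤ, a n * Complex.exp (lam n * (t : ℂ))) + d t)
    (c : ℝ) (hc : 2 < c) :
    Filter.Tendsto
      (fun T : ℝ =>
        (Real.sqrt (∫ t in T..(T + c), ‖y t‖ ^ 2) +
            Real.sqrt (∫ t in (T - 2)..(T + c - 2), ‖y t‖ ^ 2)) /
        (Real.sqrt (∫ t in T..(T + c), ‖y t‖ ^ 2) -
            Real.sqrt (∫ t in (T - 2)..(T + c - 2), ‖y t‖ ^ 2)))
      Filter.atTop (nhds q) := by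
  have : Fact ((0 : ℝ) < 2) := ⟨two_pos⟩
  set σ := Real.log ((q + 1) / (q - 1)) / 2
  have hratio : 1 < (q + 1) / (q - 1) := by rw [one_lt_div (by linarith)]; linarith
  have hσ : 0 < σ := by positivity [Real.log_pos hratio]
  set G : C(AddCircle (2 : ℝ), ℂ) := ∑' n, a n • fourier n
  set ye : ℝ → ℂ := fun t => (Real.exp (σ * t) : ℂ) * G t
  have hye : y = ye + d := funext fun t => by
    rw [hy, tsum_mul_exp_eq_exp_mul_tsum_smul_fourier (p := 2) ha (σ := σ)
      (fun n => by rw [hlam]; simp only [σ]; push_cast; ring)]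
    rfl
  have hwindow : ∀ T, |l2NormOn y T (T + c) - l2NormOn ye T (T + c)| ≤ √(c * M ^ 2) :=
    fun T => by
      simpa [hye] using abs_l2NormOn_add_sub_le_of_norm_le (a := T) (b := T + c) (by linarith)
        (by fun_prop) hdmeas.aestronglyMeasurable hdM
  have hshift : ∀ T, |l2NormOn y (T - 2) (T + c - 2) - Real.exp (-(σ * 2)) * l2NormOn ye T (T + c)|
      ≤ √(c * M ^ 2) := fun T => by
    rw [← l2NormOn_exp_mul_sub_period G, show T + c - 2 = T - 2 + c by ring]
    exact hwindow (T - 2)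
  have hlimit : (1 + Real.exp (-(σ * 2))) / (1 - Real.exp (-(σ * 2))) = q := by
    rw [show σ * 2 = Real.log ((q + 1) / (q - 1)) by ring, Real.exp_neg,
      Real.exp_log (zero_lt_one.trans hratio), inv_div]
    field_simp
    ring
  rw [← hlimit]
  exact tendsto_add_div_sub_of_abs_sub_le
    (tendsto_l2NormOn_exp_mul_tsum_smul_fourier_atTop ha ha0 hσ hc.le) hwindow hshift
    (Real.exp_lt_one_iff.2 (by linarith)).ne

/-- Corollary 3.2 of the paper for the anti-stable wave equation: the estimator computed
from two shifted windows of the disturbed output converges to the true anti-damping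
coefficient `q` as the window start time tends to infinity. -/
theorem wave_disturbed_identification (q : ℝ) (hq : 1 < q)
    (lam : ℤ → ℂ)
    (hlam : ∀ n : ℤ,
      lam n = ((Real.log ((q + 1) / (q - 1)) : ℂ)) / 2 + (n : ℂ) * (Real.pi : ℂ) * Complex.I)
    (a : ℤ → ℂ) (ha : Summable fun n => ‖a n‖) (ha0 : a ≠ 0)
    (M : ℝ) (hM : 0 ≤ M)
    (d : ℝ → ℂ) (hdmeas : Measurable d) (hdM : ∀ t : ℝ, ‖d t‖ ≤ M)
    (y : ℝ → ℂ)
    (hy : ∀ t : ℝ, y t = (∑' n : ℤ, a n * Complex.exp (lam n * (t : ℂ))) + d t)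
    (c : ℝ) (hc : 2 < c) :
    Filter.Tendsto
      (fun T : ℝ =>
        (Real.sqrt (∫ t in T..(T + c), ‖y t‖ ^ 2) +
            Real.sqrt (∫ t in (T - 2)..(T + c - 2), ‖y t‖ ^ 2)) /
        (Real.sqrt (∫ t in T..(T + c), ‖y t‖ ^ 2) -
            Real.sqrt (∫ t in (T - 2)..(T + c - 2), ‖y t‖ ^ 2)))
      Filter.atTop (nhds q) :=
  wave_disturbed_identification_general q hq lam hlam a ha ha0 M d hdmeas hdM y hy c hc
end
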